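/- Let A ⊆ ℤ^n be finite and for each k ∈ ℤ let A_k = {x ∈ A : x(1) = k}. Then the cell content of A is at least the sum over k ∈ ℤ of the cell contents of A_k: Σ(A) ≥ Σ_k Σ(A_k). -/

import Mathlib

/-- The coordinate convex hull of a set `B ⊆ ℤ^I`. -/
def cconvZ {ι : Type*} (B : Set (ι → ℤ)) : Set (ι → ℤ) :=
  {x | ∀ θ : ι → Bool, ∃ y ∈ B,
    ∀ i, (θ i = true → x i ≤ y i) ∧ (θ i = false → y i ≤ x i)}

/-- The number of integer cells `∏_{i∈I} {a i, a i + 1}` contained in the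
coordinate convex hull of the projection of `A` onto `I`.  For `I = ∅` this
equals `1` if `A` is nonempty and `0` otherwise. -/
noncomputable def cellCountZ {n : ℕ} (A : Finset (Fin n → ℤ)) (I : Finset (Fin n)) : ℕ :=
  Set.ncard {a : {i // i ∈ I} → ℤ |
    ∀ c : {i // i ∈ I} → ℤ, (∀ i, c i = a i ∨ c i = a i + 1) →
      c ∈ cconvZ {z : {i // i ∈ I} → ℤ | ∃ x ∈ A, ∀ i : {i // i ∈ I}, x i.1 = z i}}

/-- The cell content `Σ(A)`: the total number of integer cells in the
coordinate convex hulls of all coordinate projections of `A`, including the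
trivial projection (which contributes `1` iff `A ≠ ∅`). -/
noncomputable def cellContent {n : ℕ} (A : Finset (Fin n → ℤ)) : ℕ :=
  ∑ I : Finset (Fin n), cellCountZ A I

/-!
Split the subsets of coordinates into pairs `I`, `insert j I` with `j ∉ I`. A fiber `A_k` of the
coordinate `j` is flat in direction `j`, so it has no cells over `insert j I`. Over `I`, fix a
cell `a`: if it is a cell of the fibers `A_k` and `A_k'` with `k < k'`, then for every `k ≤ h < k'`
the cell `a × {h, h + 1}` lies in the coordinate convex hull of the projection of `A` to
`insert j I`. So the pair `(a, k)` is charged to the cell `a` of `A` when `k` is the first fiber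
containing `a`, and otherwise to the cell `a × {k - 1, k}`; this charging is injective.
-/

section cconvZ

variable {ι : Type*} {B B' : Set (ι → ℤ)}

theorem cconvZ_mono (h : B ⊆ B') : cconvZ B ⊆ cconvZ B' := fun x hx θ => by
  obtain ⟨y, hy, hxy⟩ := hx θ
  exact ⟨y, h hy, hxy⟩

theorem cconvZ_subset_Icc {l u : ι → ℤ} (hB : B ⊆ Set.Icc l u) : cconvZ B ⊆ Set.Icc l u := by
  intro x hx
  obtain ⟨y, hy, hxy⟩ := hx fun _ => true
  obtain ⟨y', hy', hy'x⟩ := hx fun _ => false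
  exact ⟨fun i => (hB hy').1 i |>.trans ((hy'x i).2 rfl),
    fun i => ((hxy i).1 rfl).trans ((hB hy).2 i)⟩

theorem Set.Finite.cconvZ [Fintype ι] [DecidableEq ι] (hB : B.Finite) : (cconvZ B).Finite := by
  obtain ⟨l, hl⟩ := hB.bddBelow
  obtain ⟨u, hu⟩ := hB.bddAbove
  exact (Set.finite_Icc l u).subset (cconvZ_subset_Icc fun _ hy => ⟨hl hy, hu hy⟩)

theorem apply_eq_of_mem_cconvZ {i : ι} {k : ℤ} (hB : ∀ y ∈ B, y i = k) {x : ι → ℤ}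
    (hx : x ∈ cconvZ B) : x i = k := by
  obtain ⟨y, hy, hxy⟩ := hx fun _ => true
  obtain ⟨y', hy', hy'x⟩ := hx fun _ => false
  have hle : x i ≤ k := hB y hy ▸ (hxy i).1 rfl
  have hge : k ≤ x i := hB y' hy' ▸ (hy'x i).2 rfl
  exact le_antisymm hle hge

end cconvZ

namespace CellContent

variable {n : ℕ}

/-- The projection `P_I A`. -/
def proj (A : Finset (Fin n → ℤ)) (I : Finset (Fin n)) : Set ({i // i ∈ I} → ℤ) :=
  {z | ∃ x ∈ A, ∀ i : {i // i ∈ I}, x i.1 = z i}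

/-- The lower corners of the integer cells counted by `cellCountZ A I`. -/
def cells (A : Finset (Fin n → ℤ)) (I : Finset (Fin n)) : Set ({i // i ∈ I} → ℤ) :=
  {a | ∀ c : {i // i ∈ I} → ℤ, (∀ i, c i = a i ∨ c i = a i + 1) → c ∈ cconvZ (proj A I)}

theorem cellCountZ_eq_ncard_cells (A : Finset (Fin n → ℤ)) (I : Finset (Fin n)) :
    cellCountZ A I = (cells A I).ncard := rfl

theorem cells_mono {A A' : Finset (Fin n → ℤ)} (h : A ⊆ A') (I : Finset (Fin n)) :
    cells A I ⊆ cells A' I := fun _ ha c hc =>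
  cconvZ_mono (by rintro _ ⟨x, hx, hxz⟩; exact ⟨x, h hx, hxz⟩) (ha c hc)

theorem proj_finite (A : Finset (Fin n → ℤ)) (I : Finset (Fin n)) : (proj A I).Finite :=
  (A.finite_toSet.image fun (x : Fin n → ℤ) (i : {i // i ∈ I}) => x i.1).subset
    fun _ ⟨x, hx, hxz⟩ => ⟨x, hx, funext hxz⟩

theorem cells_finite (A : Finset (Fin n → ℤ)) (I : Finset (Fin n)) : (cells A I).Finite :=
  (proj_finite A I).cconvZ.subset fun a ha => ha a fun _ => Or.inl rfl

theorem cells_eq_empty_of_forall_apply_eq {A : Finset (Fin n → ℤ)} {I : Finset (Fin n)}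
    {j : Fin n} (hj : j ∈ I) {k : ℤ} (hA : ∀ x ∈ A, x j = k) : cells A I = ∅ := by
  refine Set.eq_empty_of_forall_notMem fun a ha => ?_
  let j' : {i // i ∈ I} := ⟨j, hj⟩
  have hflat : ∀ z ∈ proj A I, z j' = k := fun z ⟨x, hx, hxz⟩ => hxz j' ▸ hA x hx
  have hlow := apply_eq_of_mem_cconvZ hflat (ha a fun _ => Or.inl rfl)
  have hhigh := apply_eq_of_mem_cconvZ hflat (ha (Function.update a j' (a j' + 1)) fun i => by
    rcases eq_or_ne i j' with rfl | hi
    · simp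
    · simp [hi])
  rw [Function.update_self] at hhigh
  omega

def fiber (A : Finset (Fin n → ℤ)) (j : Fin n) (k : ℤ) : Finset (Fin n → ℤ) :=
  A.filter fun x => x j = k

theorem cellCountZ_fiber_of_mem (A : Finset (Fin n → ℤ)) {I : Finset (Fin n)} {j : Fin n}
    (hj : j ∈ I) (k : ℤ) : cellCountZ (fiber A j k) I = 0 := by
  rw [cellCountZ_eq_ncard_cells, cells_eq_empty_of_forall_apply_eq (A := fiber A j k) hj
    fun x hx => (Finset.mem_filter.1 hx).2, Set.ncard_empty]

section extend

variable {I : Finset (Fin n)} {j : Fin n}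

def extend (a : {i // i ∈ I} → ℤ) (h : ℤ) : {i // i ∈ insert j I} → ℤ :=
  fun i => if hi : i.1 ∈ I then a ⟨i.1, hi⟩ else h

def restrict {β : Type*} (c : {i // i ∈ insert j I} → β) : {i // i ∈ I} → β :=
  fun i => c ⟨i.1, Finset.mem_insert_of_mem i.2⟩

theorem extend_injective2 (hj : j ∉ I) : Function.Injective2 (extend (j := j) (I := I)) := by
  intro a b h h' heq
  refine ⟨funext fun i => ?_, ?_⟩
  · simpa [extend, i.2] using congrFun heq ⟨i.1, Finset.mem_insert_of_mem i.2⟩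
  · simpa [extend, hj] using congrFun heq ⟨j, Finset.mem_insert_self j I⟩

theorem exists_witness_of_restrict_mem_cconvZ {A : Finset (Fin n → ℤ)} {k : ℤ}
    {c : {i // i ∈ insert j I} → ℤ} (hc : restrict c ∈ cconvZ (proj (fiber A j k) I))
    (θ : {i // i ∈ insert j I} → Bool)
    (hθ : let j' := ⟨j, Finset.mem_insert_self j I⟩
      (θ j' = true → c j' ≤ k) ∧ (θ j' = false → k ≤ c j')) :
    ∃ y ∈ proj A (insert j I), ∀ i, (θ i = true → c i ≤ y i) ∧ (θ i = false → y i ≤ c i) := by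
  obtain ⟨z, ⟨x, hx, hxz⟩, hz⟩ := hc (restrict θ)
  obtain ⟨hxA, hxj⟩ := Finset.mem_filter.1 hx
  refine ⟨fun i => x i.1, ⟨x, hxA, fun _ => rfl⟩, fun i => ?_⟩
  rcases Finset.mem_insert.1 i.2 with hi | hi
  · obtain rfl : i = ⟨j, Finset.mem_insert_self j I⟩ := Subtype.ext hi
    simpa only [hxj] using hθ
  · have hzi := hz ⟨i.1, hi⟩
    rw [← hxz] at hzi
    exact hzi

theorem extend_mem_cells {A : Finset (Fin n → ℤ)} (hj : j ∉ I) {a : {i // i ∈ I} → ℤ}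
    {k k' h : ℤ} (ha : a ∈ cells (fiber A j k) I) (ha' : a ∈ cells (fiber A j k') I)
    (hk : k ≤ h) (hk' : h < k') : extend a h ∈ cells A (insert j I) := by
  intro c hc θ
  have hcj : c ⟨j, Finset.mem_insert_self j I⟩ = h ∨
      c ⟨j, Finset.mem_insert_self j I⟩ = h + 1 := by
    simpa [extend, hj] using hc ⟨j, Finset.mem_insert_self j I⟩
  have hcI : ∀ i, restrict c i = a i ∨ restrict c i = a i + 1 := fun i => by
    simpa [extend, restrict, i.2] using hc ⟨i.1, Finset.mem_insert_of_mem i.2⟩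
  cases hθ : θ ⟨j, Finset.mem_insert_self j I⟩
  · exact exists_witness_of_restrict_mem_cconvZ (ha _ hcI) θ ⟨by simp [hθ], fun _ => by omega⟩
  · exact exists_witness_of_restrict_mem_cconvZ (ha' _ hcI) θ ⟨fun _ => by omega, by simp [hθ]⟩

end extend

section charge

variable (A : Finset (Fin n → ℤ)) (j : Fin n) (I : Finset (Fin n))

open Classical in
noncomputable def charge (p : Σ _ : ℤ, {i // i ∈ I} → ℤ) :
    ({i // i ∈ I} → ℤ) ⊕ ({i // i ∈ insert j I} → ℤ) :=
  if ∃ k < p.1, p.2 ∈ cells (fiber A j k) I then .inr (extend p.2 (p.1 - 1)) else .inl p.2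

variable {I} {j}

theorem charge_mem {p : Σ _ : ℤ, {i // i ∈ I} → ℤ} (hj : j ∉ I)
    (hp : p.2 ∈ cells (fiber A j p.1) I) :
    charge A j I p ∈ Finset.disjSum (cells_finite A I).toFinset
      (cells_finite A (insert j I)).toFinset := by
  unfold charge
  split_ifs with h
  · obtain ⟨k, hk, hak⟩ := h
    simpa using extend_mem_cells hj hak hp (by omega) (by omega)
  · simpa using cells_mono (Finset.filter_subset _ A) I hp

theorem charge_injOn (hj : j ∉ I) :
    Set.InjOn (charge A j I) {p | p.2 ∈ cells (fiber A j p.1) I} := by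
  rintro ⟨k, a⟩ hka ⟨k', b⟩ hkb heq
  change a ∈ cells (fiber A j k) I at hka
  change b ∈ cells (fiber A j k') I at hkb
  by_cases ha : ∃ l < k, a ∈ cells (fiber A j l) I <;>
    by_cases hb : ∃ l < k', b ∈ cells (fiber A j l) I <;>
    simp only [charge, ha, hb, if_true, if_false, reduceCtorEq] at heq
  · obtain ⟨rfl, hk⟩ := extend_injective2 hj (Sum.inr_injective heq)
    obtain rfl : k = k' := by omega
    rfl
  · obtain rfl := Sum.inl_injective heq
    obtain hlt | rfl | hgt := lt_trichotomy k k'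
    · exact absurd ⟨k, hlt, hka⟩ hb
    · rfl
    · exact absurd ⟨k', hgt, hkb⟩ ha

end charge

theorem sum_cellCountZ_fiber_le (A : Finset (Fin n → ℤ)) (K : Finset ℤ) {j : Fin n}
    {I : Finset (Fin n)} (hj : j ∉ I) :
    ∑ k ∈ K, cellCountZ (fiber A j k) I ≤ cellCountZ A I + cellCountZ A (insert j I) := by
  simp only [cellCountZ_eq_ncard_cells, Set.ncard_eq_toFinset_card _ (cells_finite _ _)]
  rw [← Finset.card_sigma, ← Finset.card_disjSum]
  refine Finset.card_le_card_of_injOn (charge A j I) (fun p hp => ?_) ?_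
  · exact charge_mem A hj (by simpa using (Finset.mem_sigma.1 hp).2)
  · exact (charge_injOn A hj).mono fun p hp => by simpa using (Finset.mem_sigma.1 hp).2

theorem cellContent_eq_sum_powerset_erase (A : Finset (Fin n → ℤ)) (j : Fin n) :
    cellContent A = ∑ I ∈ (Finset.univ.erase j).powerset,
      (cellCountZ A I + cellCountZ A (insert j I)) := by
  rw [Finset.sum_add_distrib, ← Finset.sum_powerset_insert (Finset.notMem_erase j _),
    Finset.insert_erase (Finset.mem_univ j), Finset.powerset_univ, cellContent]

theorem cellContent_fiber (A : Finset (Fin n → ℤ)) (j : Fin n) (k : ℤ) :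
    cellContent (fiber A j k) =
      ∑ I ∈ (Finset.univ.erase j).powerset, cellCountZ (fiber A j k) I := by
  simp only [cellContent_eq_sum_powerset_erase _ j,
    cellCountZ_fiber_of_mem A (Finset.mem_insert_self j _), add_zero]

theorem sum_cellContent_fiber_le (A : Finset (Fin n → ℤ)) (K : Finset ℤ) (j : Fin n) :
    ∑ k ∈ K, cellContent (fiber A j k) ≤ cellContent A := by
  simp only [cellContent_fiber, cellContent_eq_sum_powerset_erase A j]
  rw [Finset.sum_comm]
  exact Finset.sum_le_sum fun I hI =>
    sum_cellCountZ_fiber_le A K fun hjI => Finset.notMem_erase j _ (Finset.mem_powerset.1 hI hjI)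

end CellContent

/-- **Lemma 2.7.** Partitioning `A ⊆ ℤ^n` into the fibers
`A_k = {x ∈ A : x(1) = k}` of the first coordinate, the cell content of `A`
is at least the sum of the cell contents of the fibers. -/
theorem cellContent_ge_sum_fibers (n : ℕ) (A : Finset (Fin (n + 1) → ℤ)) :
    ∑ k ∈ A.image (fun x => x 0),
      cellContent (A.filter (fun x => x 0 = k)) ≤ cellContent A :=
  CellContent.sum_cellContent_fiber_le A _ 0
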